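/- Let p > 1 be real, z ∈ ℝ^n with z_i > 0 and α := ‖z‖_p^p − |z_i|^p > 0. Then for all λ with 0 < λ ≤ 1/z_i, ‖e_i − λz‖_p^p ≤ 1 + λ^p α − λ z_i, and there exists λ in this range making the right-hand side strictly less than 1. -/

import Mathlib

open Filter Topology

/-
Off the `i`-th coordinate `e_i - λ z` is just `-λ z`, so `‖e_i - λ z‖_p^p = |1 - λ z_i|^p + λ^p α`.
For `0 ≤ λ z_i ≤ 1` and `p ≥ 1` the first term is at most `1 - λ z_i`. Since `p > 1`, the term
`λ^p α` is `o(λ)` as `λ → 0⁺`, so the linear gain `λ z_i` wins for small `λ`.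
-/

lemma sum_abs_single_sub_mul_rpow {ι : Type*} [Fintype ι] [DecidableEq ι] (p : ℝ) (z : ι → ℝ)
    (i : ι) {lam : ℝ} (hlam : 0 ≤ lam) :
    ∑ j, |(Pi.single i (1 : ℝ) : ι → ℝ) j - lam * z j| ^ p
      = |1 - lam * z i| ^ p + lam ^ p * ((∑ j, |z j| ^ p) - |z i| ^ p) := by
  have hoff : ∀ j ∈ ({i}ᶜ : Finset ι),
      |(Pi.single i (1 : ℝ) : ι → ℝ) j - lam * z j| ^ p = lam ^ p * |z j| ^ p := by
    intro j hj
    rw [Pi.single_eq_of_ne (by simpa using hj), zero_sub, abs_neg, abs_mul, abs_of_nonneg hlam,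
      Real.mul_rpow hlam (abs_nonneg _)]
  rw [Fintype.sum_eq_add_sum_compl i, Finset.sum_congr rfl hoff, ← Finset.mul_sum,
    Fintype.sum_eq_add_sum_compl i (fun j => |z j| ^ p), Pi.single_eq_same, add_sub_cancel_left]

lemma abs_one_sub_rpow_le {p t : ℝ} (hp : 1 ≤ p) (ht₀ : 0 ≤ t) (ht₁ : t ≤ 1) :
    |1 - t| ^ p ≤ 1 - t := by
  rw [abs_of_nonneg (sub_nonneg.mpr ht₁)]
  exact Real.rpow_le_self_of_le_one (by linarith) (by linarith) hp

lemma eventually_rpow_mul_lt_mul {p : ℝ} (hp : 1 < p) (a : ℝ) {b : ℝ} (hb : 0 < b) :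
    ∀ᶠ lam in 𝓝[>] (0 : ℝ), lam ^ p * a < lam * b := by
  have hlim : Tendsto (fun lam : ℝ => lam ^ (p - 1) * a) (𝓝[>] 0) (𝓝 0) := by
    have hcont := Real.continuousAt_rpow_const 0 (p - 1) (Or.inr (by linarith))
    simpa [Real.zero_rpow (by linarith : p - 1 ≠ 0)] using
      (hcont.tendsto.mono_left nhdsWithin_le_nhds).mul_const a
  filter_upwards [hlim.eventually (gt_mem_nhds hb), self_mem_nhdsWithin] with lam hlt hpos
  have hsplit : lam ^ p = lam * lam ^ (p - 1) := by
    rw [← Real.rpow_one_add' hpos.out.le (by linarith), add_sub_cancel]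
  rw [hsplit, mul_assoc]
  exact mul_lt_mul_of_pos_left hlt hpos.out

theorem key_estimate_general {n : ℕ} (p : ℝ) (hp : 1 < p) (z : Fin n → ℝ) (i : Fin n)
    (hzi : 0 < z i) (α : ℝ) (hα : α = (∑ j, |z j| ^ p) - |z i| ^ p) :
    (∀ lam : ℝ, 0 < lam → lam ≤ 1 / z i →
        ∑ j, |(Pi.single i (1 : ℝ) : Fin n → ℝ) j - lam * z j| ^ p ≤ 1 + lam ^ p * α - lam * z i) ∧
      ∃ lam : ℝ, 0 < lam ∧ lam ≤ 1 / z i ∧ 1 + lam ^ p * α - lam * z i < 1 := by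
  constructor
  · intro lam hlam hle
    have hlz : lam * z i ≤ 1 := (le_div_iff₀ hzi).mp hle
    rw [sum_abs_single_sub_mul_rpow p z i hlam.le, ← hα]
    linarith [abs_one_sub_rpow_le hp.le (mul_pos hlam hzi).le hlz]
  · have hsmall : ∀ᶠ lam in 𝓝[>] (0 : ℝ), lam ≤ 1 / z i :=
      nhdsWithin_le_nhds (ge_mem_nhds (one_div_pos.mpr hzi))
    obtain ⟨lam, hgain, hle, hpos⟩ :=
      ((eventually_rpow_mul_lt_mul hp α hzi).and (hsmall.and self_mem_nhdsWithin)).exists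
    exact ⟨lam, hpos, hle, by linarith⟩

theorem key_estimate {n : ℕ} (p : ℝ) (hp : 1 < p) (z : Fin n → ℝ) (i : Fin n)
    (hzi : 0 < z i) (α : ℝ) (hα : α = (∑ j, |z j| ^ p) - |z i| ^ p) (hαpos : 0 < α) :
    (∀ lam : ℝ, 0 < lam → lam ≤ 1 / z i →
        ∑ j, |(Pi.single i (1 : ℝ) : Fin n → ℝ) j - lam * z j| ^ p ≤ 1 + lam ^ p * α - lam * z i) ∧
      ∃ lam : ℝ, 0 < lam ∧ lam ≤ 1 / z i ∧ 1 + lam ^ p * α - lam * z i < 1 :=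
  key_estimate_general p hp z i hzi α hα
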